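/- arXiv:1307.3815 — 2 statements merged into one kernel-verified Lean document; each statement's English description precedes it below -/
import Mathlib

section
/- Let p, q be idempotents in a ring R. Then the commutator pq - qp is Drazin invertible if and only if both pq and p - q are Drazin invertible. -/
variable {R : Type*} [Ring R]

def IsDrazinInverse (a b : R) : Prop :=
  a * b = b * a ∧ b * a * b = b ∧ ∃ k : ℕ, 0 < k ∧ a ^ k = a ^ (k + 1) * b

def IsDrazinInvertible (a : R) : Prop := ∃ b, IsDrazinInverse a b

namespace DrazinAux

lemma comm_pow {x z : R} (h : z * x = x * z) (n : ℕ) : z * x ^ n = x ^ n * z := by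
  induction n with
  | zero => simp
  | succ n ih =>
    calc z * x ^ (n+1) = z * x ^ n * x := by rw [pow_succ, mul_assoc]
    _ = x ^ n * z * x := by rw [ih]
    _ = x ^ (n+1) * z := by rw [mul_assoc, h, ← mul_assoc, ← pow_succ]

lemma mono {x y : R} {k : ℕ} (hkk : x ^ k = x ^ (k+1) * y) (i : ℕ) :
    x ^ (k+i) = x ^ (k+i+1) * y := by
  induction i with
  | zero => simpa using hkk
  | succ i ih =>
    calc x ^ (k+(i+1)) = x * x ^ (k+i) := by rw [← pow_succ']; rfl
    _ = x * (x ^ (k+i+1) * y) := by rw [ih]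
    _ = (x * x ^ (k+i+1)) * y := by rw [mul_assoc]
    _ = x ^ (k+(i+1)+1) * y := by rw [← pow_succ']; rfl

lemma iter {x y : R} {k : ℕ} (hkk : x ^ k = x ^ (k+1) * y) (i j : ℕ) :
    x ^ (k+i) = x ^ (k+i+j) * y ^ j := by
  induction j with
  | zero => simp
  | succ j ih =>
    have e1 : k + (i+j) = k+i+j := by omega
    have h1 := mono hkk (i+j)
    rw [e1] at h1
    calc x ^ (k+i) = x ^ (k+i+j) * y ^ j := ih
    _ = (x ^ (k+i+j+1) * y) * y ^ j := by rw [← h1]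
    _ = x ^ (k+i+j+1) * (y * y ^ j) := by rw [mul_assoc]
    _ = x ^ (k+i+(j+1)) * y ^ (j+1) := by rw [← pow_succ']; rfl

lemma drazin_of_comm_pow {x w : R} (hc : x * w = w * x) {k : ℕ} (hk : 0 < k)
    (h : x ^ k = x ^ (k+1) * w) : IsDrazinInvertible x := by
  have hwx : w * x = x * w := hc.symm
  have hxwn : ∀ n, x * w ^ n = w ^ n * x := fun n => comm_pow hc n
  have f : ∀ j, x ^ (k+j) * w ^ j = x ^ k := by
    intro j
    induction j with
    | zero => simp
    | succ j ih =>
      calc x ^ (k+(j+1)) * w ^ (j+1) = x ^ (k+j+1) * (w * w ^ j) := by rw [pow_succ']; rfl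
      _ = (x ^ (k+j+1) * w) * w ^ j := by rw [mul_assoc]
      _ = x ^ (k+j) * w ^ j := by rw [← mono h j]
      _ = x ^ k := ih
  have e2 : (k+1) + k = k + (k+1) := by omega
  have fk1 : x ^ (k+1) * x ^ k * w ^ (k+1) = x ^ k := by
    rw [← pow_add, e2]; exact f (k+1)
  have e1 : (x ^ k * w ^ (k+1)) * x = x ^ (k+1) * w ^ (k+1) := by
    rw [mul_assoc, ← hxwn, ← mul_assoc, ← pow_succ]
  refine ⟨x ^ k * w ^ (k+1), ?_, ?_, k, hk, ?_⟩
  · calc x * (x ^ k * w ^ (k+1)) = (x * x ^ k) * w ^ (k+1) := by rw [mul_assoc]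
    _ = (x ^ k * x) * w ^ (k+1) := by rw [← pow_succ', pow_succ]
    _ = x ^ k * (x * w ^ (k+1)) := by rw [mul_assoc]
    _ = x ^ k * (w ^ (k+1) * x) := by rw [hxwn]
    _ = (x ^ k * w ^ (k+1)) * x := by rw [mul_assoc]
  · have hww : w ^ (k+1) * x ^ k = x ^ k * w ^ (k+1) :=
      (comm_pow (comm_pow hwx k).symm (k+1)).symm
    calc (x ^ k * w ^ (k+1)) * x * (x ^ k * w ^ (k+1))
        = (x ^ (k+1) * w ^ (k+1)) * (x ^ k * w ^ (k+1)) := by rw [e1]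
    _ = x ^ (k+1) * (w ^ (k+1) * (x ^ k * w ^ (k+1))) := by rw [mul_assoc]
    _ = x ^ (k+1) * (w ^ (k+1) * x ^ k * w ^ (k+1)) := by rw [← mul_assoc (w ^ (k+1))]
    _ = x ^ (k+1) * (x ^ k * w ^ (k+1) * w ^ (k+1)) := by rw [hww]
    _ = x ^ (k+1) * x ^ k * w ^ (k+1) * w ^ (k+1) := by rw [← mul_assoc, ← mul_assoc]
    _ = x ^ k * w ^ (k+1) := by rw [fk1]
  · calc x ^ k = x ^ (k+1) * x ^ k * w ^ (k+1) := fk1.symm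
    _ = x ^ (k+1) * (x ^ k * w ^ (k+1)) := by rw [mul_assoc]

lemma drazin_comm {x y z : R} (h : IsDrazinInverse x y) (hz : z * x = x * z) :
    z * y = y * z := by
  obtain ⟨hc, hy, k, hk, hkk⟩ := h
  obtain ⟨m, rfl⟩ : ∃ m, k = m + 1 := ⟨k - 1, by omega⟩
  obtain ⟨e, he⟩ : ∃ e, e = x * y := ⟨_, rfl⟩
  have hee : e * e = e := by rw [he, mul_assoc, ← mul_assoc y x y, hy]
  have hey : e * y = y := by rw [he, hc]; exact hy
  have hye : y * e = y := by rw [he, ← mul_assoc]; exact hy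
  have hex : e * x = x * e := by rw [he, mul_assoc, ← hc, ← mul_assoc]
  have huy : (x * e) * y = e := by rw [mul_assoc, hey, ← he]
  have hxkyk : ∀ n, x ^ (n+1) * y ^ (n+1) = e := by
    intro n
    induction n with
    | zero => simpa using he.symm
    | succ n ih =>
      calc x ^ (n+1+1) * y ^ (n+1+1)
          = (x * x ^ (n+1)) * (y ^ (n+1) * y) := by
            rw [pow_succ' x (n+1), pow_succ y (n+1)]
      _ = x * ((x ^ (n+1) * y ^ (n+1)) * y) := by
            rw [mul_assoc, ← mul_assoc (x ^ (n+1))]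
      _ = x * (e * y) := by rw [ih]
      _ = e := by rw [hey, he]
  have hykxk : ∀ n, y ^ (n+1) * x ^ (n+1) = e := by
    intro n
    induction n with
    | zero => simp only [zero_add, pow_one, he]; exact hc.symm
    | succ n ih =>
      calc y ^ (n+1+1) * x ^ (n+1+1)
          = (y * y ^ (n+1)) * (x ^ (n+1) * x) := by
            rw [pow_succ' y (n+1), pow_succ x (n+1)]
      _ = y * ((y ^ (n+1) * x ^ (n+1)) * x) := by
            rw [mul_assoc, ← mul_assoc (y ^ (n+1))]
      _ = y * (e * x) := by rw [ih]
      _ = e := by rw [hex, ← mul_assoc, ← hc, ← he, hee]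
  have hxke : x ^ (m+1) * e = x ^ (m+1) := by
    rw [he, ← mul_assoc, ← pow_succ, ← hkk]
  have hexk : e * x ^ (m+1) = x ^ (m+1) := (comm_pow hex (m+1)).trans hxke
  have E1 : z * e = x ^ (m+1) * z * y ^ (m+1) := by
    rw [← hxkyk m, ← mul_assoc, comm_pow hz (m+1)]
  have E2 : e * z = y ^ (m+1) * z * x ^ (m+1) := by
    rw [← hykxk m, mul_assoc, ← comm_pow hz (m+1), ← mul_assoc]
  have hez_e : (e * z) * e = e * z := by rw [E2, mul_assoc, hxke]
  have he_ze : e * (z * e) = z * e := by rw [E1, ← mul_assoc, ← mul_assoc, hexk]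
  have hcom : z * e = e * z := by
    calc z * e = e * (z * e) := he_ze.symm
    _ = (e * z) * e := by rw [← mul_assoc]
    _ = e * z := hez_e
  have hswap : (e * z) * (x * e) = x * (e * z) := by
    calc (e * z) * (x * e) = e * (z * (x * e)) := by rw [mul_assoc]
    _ = e * ((z * x) * e) := by rw [← mul_assoc z x e]
    _ = e * ((x * z) * e) := by rw [hz]
    _ = e * (x * (z * e)) := by rw [mul_assoc x z e]
    _ = (e * x) * (z * e) := by rw [← mul_assoc]
    _ = (x * e) * (z * e) := by rw [hex]
    _ = x * (e * (z * e)) := by rw [mul_assoc]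
    _ = x * (z * e) := by rw [he_ze]
    _ = x * (e * z) := by rw [hcom]
  have comm_y : y * (e * z) = (e * z) * y := by
    calc y * (e * z) = y * ((e * z) * e) := by rw [hez_e]
    _ = y * ((e * z) * ((x * e) * y)) := by rw [huy]
    _ = y * (((e * z) * (x * e)) * y) := by rw [← mul_assoc (e * z) (x * e) y]
    _ = y * ((x * (e * z)) * y) := by rw [hswap]
    _ = (y * (x * (e * z))) * y := by rw [← mul_assoc y (x * (e * z)) y]
    _ = ((y * x) * (e * z)) * y := by rw [← mul_assoc y x (e * z)]
    _ = ((x * y) * (e * z)) * y := by rw [← hc]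
    _ = (e * (e * z)) * y := by rw [← he]
    _ = ((e * e) * z) * y := by rw [← mul_assoc e e z]
    _ = (e * z) * y := by rw [hee]
  calc z * y = z * (e * y) := by rw [hey]
  _ = (z * e) * y := by rw [← mul_assoc z e y]
  _ = (e * z) * y := by rw [hcom]
  _ = y * (e * z) := comm_y.symm
  _ = (y * e) * z := by rw [mul_assoc y e z]
  _ = y * z := by rw [hye]

lemma comm_mul_pow {a b : R} (hab : a * b = b * a) : ∀ n, (a*b)^n = a^n * b^n := by
  intro n
  induction n with
  | zero => simp
  | succ n ih =>
    calc (a*b)^(n+1) = (a*b)^n * (a*b) := by rw [pow_succ]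
    _ = (a^n * b^n) * (a*b) := by rw [ih]
    _ = a^n * ((b^n * a) * b) := by rw [mul_assoc (a^n) (b^n) (a*b), ← mul_assoc (b^n) a b]
    _ = a^n * ((a * b^n) * b) := by rw [← comm_pow hab n]
    _ = (a^n * a) * (b^n * b) := by rw [mul_assoc a (b^n) b, ← mul_assoc (a^n) a (b^n*b)]
    _ = a^(n+1) * b^(n+1) := by rw [← pow_succ, ← pow_succ]

lemma cline {a b : R} (h : IsDrazinInvertible (a * b)) : IsDrazinInvertible (b * a) := by
  obtain ⟨y, hc, hy, k, hk, hkk⟩ := h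
  have hXm : ∀ n, (b * a) ^ (n+1) = b * (a * b) ^ n * a := by
    intro n
    induction n with
    | zero => simp
    | succ n ih =>
      calc (b*a)^(n+1+1) = (b*a)^(n+1) * (b*a) := by rw [pow_succ]
      _ = (b * (a*b)^n * a) * (b*a) := by rw [ih]
      _ = (b * (a*b)^n) * (a * (b*a)) := by rw [mul_assoc (b * (a*b)^n) a (b*a)]
      _ = (b * (a*b)^n) * ((a*b) * a) := by rw [← mul_assoc a b a]
      _ = ((b * (a*b)^n) * (a*b)) * a := by rw [← mul_assoc]
      _ = (b * ((a*b)^n * (a*b))) * a := by rw [mul_assoc b ((a*b)^n) (a*b)]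
      _ = b * (a*b)^(n+1) * a := by rw [← pow_succ]
  have hcsq : (a*b)*(y*y) = (y*y)*(a*b) := by
    calc (a*b)*(y*y) = ((a*b)*y)*y := by rw [← mul_assoc]
    _ = (y*(a*b))*y := by rw [hc]
    _ = y*((a*b)*y) := by rw [mul_assoc]
    _ = y*(y*(a*b)) := by rw [hc]
    _ = (y*y)*(a*b) := by rw [← mul_assoc]
  have hcomm : (b*a) * (b*(y*y)*a) = (b*(y*y)*a) * (b*a) := by
    calc (b*a) * (b*(y*y)*a)
        = b * (a * (b*(y*y)*a)) := by rw [mul_assoc b a (b*(y*y)*a)]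
    _ = b * ((a * (b*(y*y))) * a) := by rw [← mul_assoc a (b*(y*y)) a]
    _ = b * (((a*b) * (y*y)) * a) := by rw [← mul_assoc a b (y*y)]
    _ = b * (((y*y) * (a*b)) * a) := by rw [hcsq]
    _ = b * ((y*y) * ((a*b) * a)) := by rw [mul_assoc (y*y) (a*b) a]
    _ = (b * (y*y)) * ((a*b) * a) := by rw [← mul_assoc b (y*y) ((a*b)*a)]
    _ = (b * (y*y)) * (a * (b*a)) := by rw [mul_assoc a b a]
    _ = ((b * (y*y)) * a) * (b*a) := by rw [← mul_assoc (b*(y*y)) a (b*a)]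
  have h1 : (a*b)^(k+1+1) * (y*y) = (a*b)^k := by
    calc (a*b)^(k+1+1)*(y*y) = ((a*b)^(k+1+1)*y)*y := by rw [← mul_assoc]
    _ = (a*b)^(k+1)*y := by rw [← mono hkk 1]
    _ = (a*b)^k := hkk.symm
  have hpow : (b*a)^(k+1) = (b*a)^(k+1+1) * (b*(y*y)*a) := by
    calc (b*a)^(k+1) = b * (a*b)^k * a := hXm k
    _ = (b * ((a*b)^(k+1+1) * (y*y))) * a := by rw [h1]
    _ = (b * (((a*b)^(k+1) * (a*b)) * (y*y))) * a := by rw [← pow_succ]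
    _ = (b * ((a*b)^(k+1) * ((a*b) * (y*y)))) * a := by rw [mul_assoc ((a*b)^(k+1)) (a*b) (y*y)]
    _ = ((b * (a*b)^(k+1)) * ((a*b) * (y*y))) * a := by rw [← mul_assoc b ((a*b)^(k+1)) _]
    _ = (b * (a*b)^(k+1)) * (((a*b) * (y*y)) * a) := by rw [mul_assoc (b * (a*b)^(k+1)) _ a]
    _ = (b * (a*b)^(k+1)) * ((a * (b*(y*y))) * a) := by rw [← mul_assoc a b (y*y)]
    _ = (b * (a*b)^(k+1)) * (a * ((b*(y*y)) * a)) := by rw [mul_assoc a (b*(y*y)) a]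
    _ = ((b * (a*b)^(k+1)) * a) * ((b*(y*y)) * a) := by rw [← mul_assoc (b * (a*b)^(k+1)) a _]
    _ = (b*a)^(k+1+1) * (b*(y*y)*a) := by rw [← hXm (k+1)]
  exact drazin_of_comm_pow hcomm (by omega) hpow

lemma mul_drazin {x₁ x₂ : R} (h₁ : IsDrazinInvertible x₁) (h₂ : IsDrazinInvertible x₂)
    (hc : x₁ * x₂ = x₂ * x₁) : IsDrazinInvertible (x₁ * x₂) := by
  obtain ⟨y₁, hc₁, hy₁, k₁, hk₁, hkk₁⟩ := h₁
  obtain ⟨y₂, hc₂, hy₂, k₂, hk₂, hkk₂⟩ := h₂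
  have a1 : x₂ * y₁ = y₁ * x₂ := drazin_comm ⟨hc₁, hy₁, k₁, hk₁, hkk₁⟩ hc.symm
  have a2 : x₁ * y₂ = y₂ * x₁ := drazin_comm ⟨hc₂, hy₂, k₂, hk₂, hkk₂⟩ hc
  have P1 : x₁^(k₁+k₂) = x₁^(k₁+k₂+1) * y₁ := mono hkk₁ k₂
  have P2 : x₂^(k₁+k₂) = x₂^(k₁+k₂+1) * y₂ := by
    have h := mono hkk₂ k₁
    rwa [show k₂+k₁ = k₁+k₂ from by omega] at h
  have hpow : (x₁*x₂)^(k₁+k₂) = (x₁*x₂)^(k₁+k₂+1) * (y₁*y₂) := by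
    calc (x₁*x₂)^(k₁+k₂) = x₁^(k₁+k₂) * x₂^(k₁+k₂) := comm_mul_pow hc _
    _ = (x₁^(k₁+k₂+1) * y₁) * (x₂^(k₁+k₂+1) * y₂) := by rw [P1, P2]
    _ = x₁^(k₁+k₂+1) * ((y₁ * x₂^(k₁+k₂+1)) * y₂) := by
        rw [mul_assoc (x₁^(k₁+k₂+1)) y₁ _, ← mul_assoc y₁ (x₂^(k₁+k₂+1)) y₂]
    _ = x₁^(k₁+k₂+1) * ((x₂^(k₁+k₂+1) * y₁) * y₂) := by rw [comm_pow a1.symm (k₁+k₂+1)]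
    _ = (x₁^(k₁+k₂+1) * x₂^(k₁+k₂+1)) * (y₁ * y₂) := by
        rw [mul_assoc (x₂^(k₁+k₂+1)) y₁ y₂, ← mul_assoc (x₁^(k₁+k₂+1)) (x₂^(k₁+k₂+1)) _]
    _ = (x₁*x₂)^(k₁+k₂+1) * (y₁*y₂) := by rw [← comm_mul_pow hc]
  have hcm : (x₁*x₂) * (y₁*y₂) = (y₁*y₂) * (x₁*x₂) := by
    calc (x₁*x₂)*(y₁*y₂) = x₁*((x₂*y₁)*y₂) := by
            rw [mul_assoc x₁ x₂ (y₁*y₂), ← mul_assoc x₂ y₁ y₂]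
    _ = x₁*((y₁*x₂)*y₂) := by rw [a1]
    _ = x₁*(y₁*(x₂*y₂)) := by rw [mul_assoc y₁ x₂ y₂]
    _ = x₁*(y₁*(y₂*x₂)) := by rw [hc₂]
    _ = (x₁*y₁)*(y₂*x₂) := by rw [← mul_assoc]
    _ = (y₁*x₁)*(y₂*x₂) := by rw [hc₁]
    _ = y₁*((x₁*y₂)*x₂) := by rw [mul_assoc y₁ x₁ (y₂*x₂), ← mul_assoc x₁ y₂ x₂]
    _ = y₁*((y₂*x₁)*x₂) := by rw [a2]
    _ = (y₁*y₂)*(x₁*x₂) := by rw [mul_assoc y₂ x₁ x₂, ← mul_assoc y₁ y₂ (x₁*x₂)]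
  exact drazin_of_comm_pow hcm (by omega) hpow

lemma pow_drazin {x : R} (h : IsDrazinInvertible x) (n : ℕ) (hn : 0 < n) :
    IsDrazinInvertible (x ^ n) := by
  obtain ⟨y, hc, hy, k, hk, hkk⟩ := h
  have hyx : y * x = x * y := hc.symm
  have hcomm : x^n * y^n = y^n * x^n := comm_pow (comm_pow hyx n).symm n
  have hle : k ≤ n*k := Nat.le_mul_of_pos_left k hn
  have key : x^(n*k) = x^(n*k+n) * y^n := by
    have h := iter hkk (n*k - k) n
    rwa [show k + (n*k - k) = n*k from by omega] at h
  have hgoal : (x^n)^k = (x^n)^(k+1) * y^n := by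
    calc (x^n)^k = x^(n*k) := by rw [← pow_mul]
    _ = x^(n*k+n) * y^n := key
    _ = (x^n)^(k+1) * y^n := by rw [show n*k+n = n*(k+1) from by ring, pow_mul]
  exact drazin_of_comm_pow hcomm hk hgoal

lemma drazin_of_pow {x : R} (n : ℕ) (hn : 0 < n) (h : IsDrazinInvertible (x^n)) :
    IsDrazinInvertible x := by
  obtain ⟨z, hc, hz, m, hm, hmm⟩ := h
  have hxz : x * z = z * x :=
    drazin_comm ⟨hc, hz, m, hm, hmm⟩ (by rw [← pow_succ', ← pow_succ])
  have hcomm : x * (x^(n-1) * z) = (x^(n-1) * z) * x := by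
    calc x * (x^(n-1)*z) = (x * x^(n-1)) * z := by rw [← mul_assoc]
    _ = (x^(n-1) * x) * z := by rw [← pow_succ', pow_succ]
    _ = x^(n-1) * (z * x) := by rw [mul_assoc, hxz]
    _ = (x^(n-1) * z) * x := by rw [← mul_assoc]
  have key : x^(n*m) = x^(n*m+1) * (x^(n-1) * z) := by
    have h0 : x^(n*m) = x^(n*m+n) * z := by
      have h1 := hmm
      rw [← pow_mul, ← pow_mul] at h1
      rwa [show n*(m+1) = n*m+n from by ring] at h1
    calc x^(n*m) = x^(n*m+n) * z := h0
    _ = (x^(n*m+1) * x^(n-1)) * z := by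
        rw [← pow_add, show n*m+1+(n-1) = n*m+n from by omega]
    _ = x^(n*m+1) * (x^(n-1) * z) := by rw [mul_assoc]
  exact drazin_of_comm_pow hcomm (Nat.mul_pos hn hm) key

lemma neg_drazin {x : R} (h : IsDrazinInvertible x) : IsDrazinInvertible (-x) := by
  obtain ⟨y, hc, hy, k, hk, hkk⟩ := h
  have hcomm : (-x) * (-y) = (-y) * (-x) := by rw [neg_mul_neg, neg_mul_neg, hc]
  have hsq : ((-1:R))^(k+1+1) = (-1)^k := by
    rw [pow_succ, pow_succ, mul_assoc, neg_mul_neg, mul_one, mul_one]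
  have key : (-x)^(k+1) * (-y) = (-x)^k := by
    calc (-x)^(k+1) * (-y) = ((-1)^(k+1) * x^(k+1)) * (-y) := by rw [neg_pow]
    _ = (-1)^(k+1) * (x^(k+1) * (-y)) := by rw [mul_assoc]
    _ = (-1)^(k+1) * (-(x^(k+1) * y)) := by rw [mul_neg]
    _ = (-1)^(k+1) * (-(x^k)) := by rw [← hkk]
    _ = (-1)^(k+1) * ((-1) * x^k) := by rw [neg_eq_neg_one_mul (x^k)]
    _ = ((-1)^(k+1) * (-1)) * x^k := by rw [← mul_assoc]
    _ = (-1)^(k+1+1) * x^k := by rw [← pow_succ]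
    _ = (-1)^k * x^k := by rw [hsq]
    _ = (-x)^k := by rw [← neg_pow]
  exact drazin_of_comm_pow hcomm hk key.symm

lemma idem_drazin {r : R} (h : r * r = r) : IsDrazinInvertible r :=
  ⟨r, rfl, by rw [h, h], 1, one_pos, by rw [pow_one, pow_succ, pow_one, h, h]⟩

lemma orth_pow_mul {c₁ c₂ : R} (h12 : c₁ * c₂ = 0) (n : ℕ) : c₁^(n+1) * c₂ = 0 := by
  rw [pow_succ, mul_assoc, h12, mul_zero]

lemma orth_mul_pow {c₁ c₂ : R} (h12 : c₁ * c₂ = 0) (n : ℕ) : c₁ * c₂^(n+1) = 0 := by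
  rw [pow_succ', ← mul_assoc, h12, zero_mul]

lemma orth_pow_add {c₁ c₂ : R} (h12 : c₁ * c₂ = 0) (h21 : c₂ * c₁ = 0) (n : ℕ) :
    (c₁ + c₂)^(n+1) = c₁^(n+1) + c₂^(n+1) := by
  induction n with
  | zero => simp
  | succ n ih =>
    calc (c₁+c₂)^(n+1+1) = (c₁+c₂)^(n+1) * (c₁+c₂) := by rw [pow_succ]
    _ = (c₁^(n+1) + c₂^(n+1)) * (c₁+c₂) := by rw [ih]
    _ = c₁^(n+1)*c₁ + c₁^(n+1)*c₂ + (c₂^(n+1)*c₁ + c₂^(n+1)*c₂) := by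
        rw [add_mul, mul_add, mul_add]
    _ = c₁^(n+1+1) + c₂^(n+1+1) := by
        rw [orth_pow_mul h12 n, orth_pow_mul h21 n, ← pow_succ, ← pow_succ]
        abel

lemma orth_add {c₁ c₂ : R} (h12 : c₁ * c₂ = 0) (h21 : c₂ * c₁ = 0)
    (H₁ : IsDrazinInvertible c₁) (H₂ : IsDrazinInvertible c₂) :
    IsDrazinInvertible (c₁ + c₂) := by
  obtain ⟨z₁, hc₁, hz₁, k₁, hk₁, hkk₁⟩ := H₁
  obtain ⟨z₂, hc₂, hz₂, k₂, hk₂, hkk₂⟩ := H₂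
  have hza : z₁ = (z₁*z₁)*c₁ := by
    calc z₁ = (z₁*c₁)*z₁ := hz₁.symm
    _ = z₁*(c₁*z₁) := by rw [mul_assoc]
    _ = z₁*(z₁*c₁) := by rw [hc₁]
    _ = (z₁*z₁)*c₁ := by rw [← mul_assoc]
  have hzb : z₁ = c₁*(z₁*z₁) := by
    calc z₁ = (z₁*c₁)*z₁ := hz₁.symm
    _ = (c₁*z₁)*z₁ := by rw [hc₁]
    _ = c₁*(z₁*z₁) := by rw [mul_assoc]
  have hza₂ : z₂ = (z₂*z₂)*c₂ := by
    calc z₂ = (z₂*c₂)*z₂ := hz₂.symm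
    _ = z₂*(c₂*z₂) := by rw [mul_assoc]
    _ = z₂*(z₂*c₂) := by rw [hc₂]
    _ = (z₂*z₂)*c₂ := by rw [← mul_assoc]
  have hzb₂ : z₂ = c₂*(z₂*z₂) := by
    calc z₂ = (z₂*c₂)*z₂ := hz₂.symm
    _ = (c₂*z₂)*z₂ := by rw [hc₂]
    _ = c₂*(z₂*z₂) := by rw [mul_assoc]
  have o1 : z₁*c₂ = 0 := by
    conv_lhs => rw [hza]
    rw [mul_assoc, h12, mul_zero]
  have o2 : c₂*z₁ = 0 := by
    conv_lhs => rw [hzb]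
    rw [← mul_assoc, h21, zero_mul]
  have o3 : z₂*c₁ = 0 := by
    conv_lhs => rw [hza₂]
    rw [mul_assoc, h21, mul_zero]
  have o4 : c₁*z₂ = 0 := by
    conv_lhs => rw [hzb₂]
    rw [← mul_assoc, h12, zero_mul]
  have hcm : (c₁+c₂)*(z₁+z₂) = (z₁+z₂)*(c₁+c₂) := by
    calc (c₁+c₂)*(z₁+z₂) = c₁*z₁ + c₁*z₂ + (c₂*z₁ + c₂*z₂) := by
            rw [add_mul, mul_add, mul_add]
    _ = z₁*c₁ + z₂*c₂ := by rw [o4, o2, hc₁, hc₂]; abel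
    _ = z₁*c₁ + z₁*c₂ + (z₂*c₁ + z₂*c₂) := by rw [o1, o3]; abel
    _ = (z₁+z₂)*(c₁+c₂) := by rw [add_mul, mul_add, mul_add]
  obtain ⟨K, hKe⟩ : ∃ K, k₁+k₂ = K+1 := ⟨k₁+k₂-1, by omega⟩
  have P1 : c₁^(k₁+k₂) = c₁^(k₁+k₂+1)*z₁ := mono hkk₁ k₂
  have P2 : c₂^(k₁+k₂) = c₂^(k₁+k₂+1)*z₂ := by
    have h := mono hkk₂ k₁
    rwa [show k₂+k₁ = k₁+k₂ from by omega] at h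
  have e₁ := orth_pow_add h12 h21 K
  have e₂ := orth_pow_add h12 h21 (K+1)
  rw [← hKe] at e₁ e₂
  have cross1 : c₁^(k₁+k₂+1)*z₂ = 0 := orth_pow_mul o4 (k₁+k₂)
  have cross2 : c₂^(k₁+k₂+1)*z₁ = 0 := orth_pow_mul o2 (k₁+k₂)
  have hpow : (c₁+c₂)^(k₁+k₂) = (c₁+c₂)^(k₁+k₂+1)*(z₁+z₂) := by
    calc (c₁+c₂)^(k₁+k₂) = c₁^(k₁+k₂) + c₂^(k₁+k₂) := e₁
    _ = c₁^(k₁+k₂+1)*z₁ + c₂^(k₁+k₂+1)*z₂ := by rw [P1, P2]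
    _ = (c₁^(k₁+k₂+1) + c₂^(k₁+k₂+1)) * (z₁+z₂) := by
        rw [add_mul, mul_add, mul_add, cross1, cross2]; abel
    _ = (c₁+c₂)^(k₁+k₂+1) * (z₁+z₂) := by rw [← e₂]
  exact drazin_of_comm_pow hcm (by omega) hpow

lemma orth_left {c₁ c₂ : R} (h12 : c₁ * c₂ = 0) (h21 : c₂ * c₁ = 0)
    (H : IsDrazinInvertible (c₁ + c₂)) : IsDrazinInvertible c₁ := by
  obtain ⟨z, hc, hz, k, hk, hkk⟩ := H
  have hc1X : c₁*(c₁+c₂) = (c₁+c₂)*c₁ := by rw [mul_add, add_mul, h12, h21]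
  have hzc : c₁*z = z*c₁ := drazin_comm ⟨hc, hz, k, hk, hkk⟩ hc1X
  obtain ⟨m, rfl⟩ : ∃ m, k = m+1 := ⟨k-1, by omega⟩
  have e₁ := orth_pow_add h12 h21 m
  have e₂ := orth_pow_add h12 h21 (m+1)
  have h0 : c₁ * (c₁+c₂)^(m+1) = c₁^(m+1+1) := by
    rw [e₁, mul_add, orth_mul_pow h12 m, add_zero, ← pow_succ']
  have h0' : c₁ * (c₁+c₂)^(m+1+1) = c₁^(m+1+1+1) := by
    rw [e₂, mul_add, orth_mul_pow h12 (m+1), add_zero, ← pow_succ']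
  have key : c₁^(m+1+1) = c₁^(m+1+1+1) * z := by
    calc c₁^(m+1+1) = c₁ * (c₁+c₂)^(m+1) := h0.symm
    _ = c₁ * ((c₁+c₂)^(m+1+1) * z) := by rw [hkk]
    _ = (c₁ * (c₁+c₂)^(m+1+1)) * z := by rw [← mul_assoc]
    _ = c₁^(m+1+1+1) * z := by rw [h0']
  exact drazin_of_comm_pow hzc (by omega) key

lemma geom_aux (u : R) : ∀ n : ℕ, ∃ G : R,
    (1-u)^n = 1 - u*G ∧ ∀ w : R, w*u = u*w → w*G = G*w := by
  intro n
  induction n with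
  | zero => exact ⟨0, by simp, by intro w _; simp⟩
  | succ n ih =>
    obtain ⟨G, hG, hGc⟩ := ih
    refine ⟨1 + G - G*u, ?_, ?_⟩
    · rw [pow_succ, hG]
      noncomm_ring
    · intro w hw
      have h1 := hGc w hw
      calc w*(1+G-G*u) = w*(1+G) - w*(G*u) := by rw [mul_sub]
      _ = (w + w*G) - (w*G)*u := by rw [mul_add, mul_one, ← mul_assoc]
      _ = (w + G*w) - G*(u*w) := by rw [h1, mul_assoc, hw]
      _ = (1+G-G*u)*w := by rw [sub_mul, add_mul, one_mul, ← mul_assoc]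

lemma drazin_of_sub_sq {u : R} (h : IsDrazinInvertible (u - u*u)) :
    IsDrazinInvertible u := by
  obtain ⟨z, hc, hz, k, hk, hkk⟩ := h
  have hcu : u*(u-u*u) = (u-u*u)*u := by noncomm_ring
  have hzu : u*z = z*u := drazin_comm ⟨hc, hz, k, hk, hkk⟩ hcu
  obtain ⟨G, hG, hGc⟩ := geom_aux u k
  have hGu : u*G = G*u := hGc u rfl
  have hcomm1 : u*(1-u) = (1-u)*u := by noncomm_ring
  have hueq : u - u*u = u*(1-u) := by noncomm_ring
  have c1 : (u-u*u)^k = u^k*(1-u)^k := by rw [hueq, comm_mul_pow hcomm1]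
  have c2 : (u-u*u)^(k+1) = u^(k+1)*(1-u)^(k+1) := by rw [hueq, comm_mul_pow hcomm1]
  have hone : (1 - u*G) + u*G = (1:R) := by abel
  have key : u^k = u^(k+1) * ((1-u)^(k+1)*z + G) := by
    calc u^k = u^k * 1 := (mul_one _).symm
    _ = u^k * ((1 - u*G) + u*G) := by rw [hone]
    _ = u^k * (1-u*G) + u^k*(u*G) := by rw [mul_add]
    _ = u^k * (1-u)^k + u^(k+1)*G := by rw [← hG, ← mul_assoc, ← pow_succ]
    _ = (u-u*u)^k + u^(k+1)*G := by rw [c1]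
    _ = (u-u*u)^(k+1)*z + u^(k+1)*G := by rw [hkk]
    _ = u^(k+1)*(1-u)^(k+1)*z + u^(k+1)*G := by rw [c2]
    _ = u^(k+1)*((1-u)^(k+1)*z) + u^(k+1)*G := by rw [mul_assoc]
    _ = u^(k+1)*((1-u)^(k+1)*z + G) := by rw [← mul_add]
  have hW : u*((1-u)^(k+1)*z + G) = ((1-u)^(k+1)*z + G)*u := by
    have h1 : u*(1-u)^(k+1) = (1-u)^(k+1)*u := comm_pow hcomm1 (k+1)
    calc u*((1-u)^(k+1)*z + G) = u*((1-u)^(k+1)*z) + u*G := by rw [mul_add]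
    _ = (u*(1-u)^(k+1))*z + u*G := by rw [← mul_assoc]
    _ = ((1-u)^(k+1)*u)*z + G*u := by rw [h1, hGu]
    _ = (1-u)^(k+1)*(z*u) + G*u := by rw [mul_assoc, hzu]
    _ = ((1-u)^(k+1)*z)*u + G*u := by rw [← mul_assoc]
    _ = ((1-u)^(k+1)*z + G)*u := by rw [← add_mul]
  exact drazin_of_comm_pow hW hk key

lemma drazin_of_sub_sq' {u : R} (h : IsDrazinInvertible (u - u*u)) :
    IsDrazinInvertible (1-u) := by
  apply drazin_of_sub_sq (u := 1-u)
  have heq : (1-u) - (1-u)*(1-u) = u - u*u := by noncomm_ring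
  rwa [heq]

end DrazinAux

open DrazinAux in
theorem stmt18 (p q : R) (hp : p ^ 2 = p) (hq : q ^ 2 = q) :
    IsDrazinInvertible (p * q - q * p) ↔ (IsDrazinInvertible (p * q) ∧ IsDrazinInvertible (p - q)) := by
  have hp' : p * p = p := by rwa [pow_two] at hp
  have hq' : q * q = q := by rwa [pow_two] at hq
  have hp2 : ∀ x : R, p * (p * x) = p * x := fun x => by rw [← mul_assoc, hp']
  have hq2 : ∀ x : R, q * (q * x) = q * x := fun x => by rw [← mul_assoc, hq']
  have H1 : (p - q) * (p - q) = p + q - p*q - q*p := by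
    simp only [mul_sub, sub_mul, mul_add, add_mul, mul_one, one_mul, mul_assoc,
      hp', hq', hp2, hq2]
    abel
  have H2 : (p*q - q*p) * (p*q - q*p) =
      (p+q-p*q-q*p)*(p+q-p*q-q*p) - (p+q-p*q-q*p) := by
    simp only [mul_sub, sub_mul, mul_add, add_mul, mul_one, one_mul, mul_assoc,
      hp', hq', hp2, hq2]
    abel
  have H3 : p*q + (1-q)*(1-p) = 1 - (p+q-p*q-q*p) := by
    simp only [mul_sub, sub_mul, mul_add, add_mul, mul_one, one_mul, mul_assoc,
      hp', hq', hp2, hq2]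
    abel
  have H4a : (p*q)*((1-q)*(1-p)) = 0 := by
    simp only [mul_sub, sub_mul, mul_add, add_mul, mul_one, one_mul, mul_assoc,
      hp', hq', hp2, hq2]
    abel
  have H4b : ((1-q)*(1-p))*(p*q) = 0 := by
    simp only [mul_sub, sub_mul, mul_add, add_mul, mul_one, one_mul, mul_assoc,
      hp', hq', hp2, hq2]
    abel
  have H5 : (p+q-p*q-q*p)*(p*(q*p)) = (p*(q*p))*(p+q-p*q-q*p) := by
    simp only [mul_sub, sub_mul, mul_add, add_mul, mul_one, one_mul, mul_assoc,
      hp', hq', hp2, hq2]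
    abel
  have H6 : (p*q)*(p+q-p*q-q*p) = (p+q-p*q-q*p)*(p*q) := by
    simp only [mul_sub, sub_mul, mul_add, add_mul, mul_one, one_mul, mul_assoc,
      hp', hq', hp2, hq2]
    abel
  have H7 : ((p*q)*(1-p))*((1-p)*q) = (p*q)*(p+q-p*q-q*p) := by
    simp only [mul_sub, sub_mul, mul_add, add_mul, mul_one, one_mul, mul_assoc,
      hp', hq', hp2, hq2]
    abel
  have H8 : ((p+q-p*q-q*p)*(p*(q*p))) * (((1-p)*q)*((p*q)*(1-p))) = 0 := by
    simp only [mul_sub, sub_mul, mul_add, add_mul, mul_one, one_mul, mul_assoc,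
      hp', hq', hp2, hq2]
    abel
  have H9 : (((1-p)*q)*((p*q)*(1-p))) * ((p+q-p*q-q*p)*(p*(q*p))) = 0 := by
    simp only [mul_sub, sub_mul, mul_add, add_mul, mul_one, one_mul, mul_assoc,
      hp', hq', hp2, hq2]
    abel
  have H10 : (p+q-p*q-q*p)*(p*(q*p)) + ((1-p)*q)*((p*q)*(1-p)) =
      (p+q-p*q-q*p) - (p+q-p*q-q*p)*(p+q-p*q-q*p) := by
    simp only [mul_sub, sub_mul, mul_add, add_mul, mul_one, one_mul, mul_assoc,
      hp', hq', hp2, hq2]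
    abel
  constructor
  · intro hb
    have hb2 : IsDrazinInvertible ((p*q - q*p) * (p*q - q*p)) := by
      have h := pow_drazin hb 2 (by omega)
      rwa [pow_two] at h
    rw [H2] at hb2
    have hb3 : IsDrazinInvertible
        ((p+q-p*q-q*p) - (p+q-p*q-q*p)*(p+q-p*q-q*p)) := by
      have h := neg_drazin hb2
      rwa [neg_sub] at h
    have hS : IsDrazinInvertible (p+q-p*q-q*p) := drazin_of_sub_sq hb3
    have hS1 : IsDrazinInvertible (1 - (p+q-p*q-q*p)) := drazin_of_sub_sq' hb3
    constructor
    · rw [← H3] at hS1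
      exact orth_left H4a H4b hS1
    · apply drazin_of_pow 2 (by omega)
      rwa [pow_two, H1]
  · rintro ⟨hpq, hpmq⟩
    have hS : IsDrazinInvertible (p+q-p*q-q*p) := by
      have h := pow_drazin hpmq 2 (by omega)
      rwa [pow_two, H1] at h
    have hqp : IsDrazinInvertible (q*p) := cline hpq
    have hpqp : IsDrazinInvertible (p*(q*p)) := by
      have e : (q*p)*p = q*p := by rw [mul_assoc, hp']
      have h : IsDrazinInvertible ((q*p)*p) := by rwa [e]
      exact cline h
    have hc1 : IsDrazinInvertible ((p+q-p*q-q*p) * (p*(q*p))) :=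
      mul_drazin hS hpqp H5
    have hpqS : IsDrazinInvertible ((p*q) * (p+q-p*q-q*p)) :=
      mul_drazin hpq hS H6
    have hc2 : IsDrazinInvertible (((1-p)*q) * ((p*q)*(1-p))) := by
      have h : IsDrazinInvertible (((p*q)*(1-p)) * ((1-p)*q)) := by rwa [H7]
      exact cline h
    have hsum := orth_add H8 H9 hc1 hc2
    rw [H10] at hsum
    have hneg := neg_drazin hsum
    rw [neg_sub] at hneg
    rw [← H2] at hneg
    apply drazin_of_pow 2 (by omega)
    rwa [pow_two]
end

section
/- Let p, q be idempotents in a ring R. Then the anti-commutator pq + qp is Drazin invertible if and only if both pq and p + q are Drazin invertible. -/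
variable {R : Type*} [Ring R]

-- Auxiliary lemmas

lemma drz_pow_ge {a b : R} {k K : ℕ} (h : a ^ k = a ^ (k+1) * b) (hK : k ≤ K) :
    a ^ K = a ^ (K+1) * b := by
  induction K, hK using Nat.le_induction with
  | base => exact h
  | succ n hn ih =>
    have h' : a ^ (n+1) = a * a ^ n := (pow_succ' a n)
    rw [h', ih, pow_succ' a (n+1), mul_assoc]

lemma idem_pow {e : R} (he : e * e = e) {n : ℕ} (hn : 0 < n) : e ^ n = e := by
  induction n with
  | zero => omega
  | succ m ih =>
    rcases Nat.eq_zero_or_pos m with hm | hm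
    · simp [hm]
    · rw [pow_succ, ih hm, he]

/-- Double commutant property. -/
lemma drz_commute {a b x : R} (hd : IsDrazinInverse a b) (hx : x * a = a * x) :
    x * b = b * x := by
  obtain ⟨h1, h2, k, hk, h3⟩ := hd
  have cab : Commute a b := h1
  have cxa : Commute x a := hx
  have he_idem : (a*b) * (a*b) = a*b := by
    calc (a*b) * (a*b) = a * (b * a * b) := by noncomm_ring
    _ = a*b := by rw [h2]
  have heb : (a*b) * b = b := by
    calc (a*b) * b = (b*a)*b := by rw [h1]
    _ = b := h2
  have hbe : b * (a*b) = b := by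
    calc b * (a*b) = (b*a)*b := by noncomm_ring
    _ = b := h2
  have hake : a ^ k * (a*b) = a ^ k := by
    rw [← mul_assoc, ← pow_succ, ← h3]
  have hea : (a*b) * a = a * (a*b) := by
    calc (a*b) * a = a * (b * a) := by rw [mul_assoc]
    _ = a * (a*b) := by rw [← h1]
  have heak : (a*b) * a ^ k = a ^ k := by
    have hc : Commute (a*b) (a^k) := (Commute.pow_right (show Commute (a*b) a from hea) k)
    rw [hc.eq, hake]
  have hab_pow : a*b = a^k * b^k := by
    rw [← cab.mul_pow, idem_pow he_idem hk]
  have hba_pow : a*b = b^k * a^k := by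
    rw [h1, ← cab.symm.mul_pow, ← h1, idem_pow he_idem hk]
  have hxak : x * a^k = a^k * x := (cxa.pow_right k).eq
  -- (a*b)*x*(a*b) = (a*b)*x
  have key1 : (a*b) * x * (a*b) = (a*b) * x := by
    have h0 : (a*b) * x * (1 - a*b) = b^k * x * (a^k * (1 - a*b)) := by
      calc (a*b) * x * (1 - a*b) = b^k * a^k * x * (1 - a*b) := by rw [← hba_pow]
      _ = b^k * (x * a^k) * (1 - a*b) := by rw [mul_assoc (b^k), hxak]
      _ = b^k * x * (a^k * (1 - a*b)) := by noncomm_ring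
    have h0' : a^k * (1 - a*b) = 0 := by rw [mul_sub, mul_one, hake, sub_self]
    rw [h0', mul_zero] at h0
    have expand : (a*b) * x * (1 - a*b) = (a*b)*x - (a*b)*x*(a*b) := by noncomm_ring
    rw [expand] at h0
    have := sub_eq_zero.mp h0
    exact this.symm
  -- (1-(a*b))*x*(a*b) = 0, i.e. x*(a*b) = (a*b)*x*(a*b)
  have key2 : x * (a*b) = (a*b) * x * (a*b) := by
    have hak1 : (1 - a*b) * a^k = 0 := by rw [sub_mul, one_mul, heak, sub_self]
    have h0 : (1 - a*b) * x * (a*b) = ((1 - a*b) * a^k) * x * b^k := by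
      calc (1 - a*b) * x * (a*b) = (1 - a*b) * x * (a^k * b^k) := by rw [← hab_pow]
      _ = (1 - a*b) * (x * a^k) * b^k := by noncomm_ring
      _ = (1 - a*b) * (a^k * x) * b^k := by rw [hxak]
      _ = ((1 - a*b) * a^k) * x * b^k := by noncomm_ring
    rw [hak1] at h0
    simp only [zero_mul] at h0
    have expand : (1 - a*b) * x * (a*b) = x*(a*b) - (a*b)*x*(a*b) := by noncomm_ring
    rw [expand] at h0
    exact sub_eq_zero.mp h0
  have hxe : x * (a*b) = (a*b) * x := by rw [key2, key1]
  -- final chain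
  calc x * b = x * (a*b*b) := by rw [heb]
  _ = x * (a*b) * b := (mul_assoc x (a*b) b).symm
  _ = a*b*x*b := by rw [hxe]
  _ = b*a*x*b := by rw [h1]
  _ = b*x*a*b := by rw [mul_assoc b a x, ← hx, ← mul_assoc]
  _ = b*(x*(a*b)) := by rw [mul_assoc, mul_assoc]
  _ = b*(a*b*x) := by rw [hxe]
  _ = (b*(a*b))*x := by rw [← mul_assoc]
  _ = b * x := by rw [hbe]

lemma drz_pow_ge' {a b : R} {k K : ℕ} (h : a ^ k = a ^ (k+1) * b) (hK : k ≤ K) :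
    a ^ K = a ^ (K+1) * b := by
  induction K, hK using Nat.le_induction with
  | base => exact h
  | succ n hn ih =>
    have h' : a ^ (n+1) = a * a ^ n := (pow_succ' a n)
    rw [h', ih, pow_succ' a (n+1), mul_assoc]

lemma drz_of_pow_eq {a c : R} (hc : a * c = c * a) {N : ℕ} (hN : 0 < N)
    (h : a ^ N = a ^ (N+1) * c) : IsDrazinInvertible a := by
  have cac : Commute a c := hc
  have key : ∀ j : ℕ, a ^ N = a ^ (N+j) * c ^ j := by
    intro j
    induction j with
    | zero => simp
    | succ n ih =>
      have e1 : a ^ (N+(n+1)) = a ^ n * a ^ (N+1) := by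
        rw [← pow_add, show n + (N+1) = N+(n+1) from by omega]
      have e2 : c ^ (n+1) = c * c ^ n := pow_succ' c n
      have : a ^ (N+(n+1)) * c ^ (n+1) = a ^ N := by
        calc a ^ (N+(n+1)) * c ^ (n+1) = (a^n * a^(N+1)) * (c * c^n) := by rw [e1, e2]
        _ = a^n * (a^(N+1) * c * c^n) := by noncomm_ring
        _ = a^n * (a^N * c^n) := by rw [← h]
        _ = (a^n * a^N) * c^n := by rw [← mul_assoc]
        _ = a^(N+n) * c^n := by rw [← pow_add, Nat.add_comm n N]
        _ = a^N := ih.symm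
      exact this.symm
  have key' : a ^ N = a ^ (2*N+1) * c ^ (N+1) := by
    have hk := key (N+1); rw [show N + (N+1) = 2*N+1 from by omega] at hk; exact hk
  refine ⟨a ^ N * c ^ (N+1), ?_, ?_, N, hN, ?_⟩
  · exact (((Commute.refl a).pow_right N).mul_right (cac.pow_right (N+1))).eq
  · have hca : c ^ (N+1) * a = a * c ^ (N+1) := ((cac.pow_right (N+1)).symm).eq
    have hcaN : c ^ (N+1) * a ^ N = a ^ N * c ^ (N+1) := ((cac.symm).pow_pow (N+1) N).eq
    calc a ^ N * c ^ (N+1) * a * (a ^ N * c ^ (N+1))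
        = a ^ N * (c ^ (N+1) * a) * (a ^ N * c ^ (N+1)) := by rw [mul_assoc (a^N)]
    _ = a ^ N * (a * c ^ (N+1)) * (a ^ N * c ^ (N+1)) := by rw [hca]
    _ = a ^ (N+1) * (c ^ (N+1) * a ^ N) * c ^ (N+1) := by rw [pow_succ]; noncomm_ring
    _ = a ^ (N+1) * (a ^ N * c ^ (N+1)) * c ^ (N+1) := by rw [hcaN]
    _ = (a ^ (N+1) * a ^ N) * (c ^ (N+1) * c ^ (N+1)) := by noncomm_ring
    _ = a ^ (2*N+1) * (c ^ (N+1) * c ^ (N+1)) := by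
        rw [← pow_add, show (N+1) + N = 2*N+1 from by omega]
    _ = (a ^ (2*N+1) * c ^ (N+1)) * c ^ (N+1) := by rw [← mul_assoc]
    _ = a ^ N * c ^ (N+1) := by rw [← key']
  · calc a ^ N = a ^ (2*N+1) * c ^ (N+1) := key'
    _ = (a^(N+1) * a^N) * c ^ (N+1) := by
        rw [← pow_add, show (N+1) + N = 2*N+1 from by omega]
    _ = a ^ (N+1) * (a ^ N * c ^ (N+1)) := by rw [mul_assoc]

lemma drz_neg {a : R} (h : IsDrazinInvertible a) : IsDrazinInvertible (-a) := by
  obtain ⟨b, h1, h2, k, hk, h3⟩ := h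
  have h3' : a^k * (a*b) = a^k := by rw [← mul_assoc, ← pow_succ, ← h3]
  refine ⟨-b, by rw [neg_mul_neg, neg_mul_neg, h1], by
    calc (-b)*(-a)*(-b) = -(b*a*b) := by noncomm_ring
    _ = -b := by rw [h2], k, hk, ?_⟩
  calc (-a)^k = (-1:R)^k * a^k := by rw [neg_pow]
  _ = (-1:R)^k * (a^k * (a*b)) := by rw [h3']
  _ = ((-1:R)^k * a^k) * (a*b) := by rw [mul_assoc]
  _ = (-a)^k * (a*b) := by rw [← neg_pow]
  _ = (-a)^k * ((-a) * (-b)) := by rw [neg_mul_neg]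
  _ = ((-a)^k * (-a)) * (-b) := by rw [← mul_assoc]
  _ = (-a)^(k+1) * (-b) := by rw [← pow_succ]

lemma drz_sq_of {a : R} (h : IsDrazinInvertible a) : IsDrazinInvertible (a^2) := by
  obtain ⟨b, h1, h2, k, hk, h3⟩ := h
  have cab : Commute a b := h1
  have hcomm : (a^2) * (b*b) = (b*b) * (a^2) :=
    ((cab.pow_left 2).mul_right (cab.pow_left 2)).eq
  have key : (a^2)^k = (a^2)^(k+1) * (b*b) := by
    have e1 : a^(2*k) = a^(2*k+1) * b := drz_pow_ge' h3 (by omega)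
    have e2 : a^(2*k+1) = a^(2*k+2) * b := drz_pow_ge' h3 (by omega)
    calc (a^2)^k = a^(2*k) := by rw [← pow_mul]
    _ = a^(2*k+1) * b := e1
    _ = (a^(2*k+2) * b) * b := by rw [← e2]
    _ = a^(2*k+2) * (b*b) := by rw [mul_assoc]
    _ = (a^2)^(k+1) * (b*b) := by rw [← pow_mul, show 2*(k+1) = 2*k+2 from by omega]
  exact drz_of_pow_eq hcomm hk key

lemma drz_of_sq {a : R} (h : IsDrazinInvertible (a^2)) : IsDrazinInvertible a := by
  obtain ⟨d, h1, h2, m, hm, h3⟩ := h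
  have had : a * d = d * a := drz_commute ⟨h1, h2, m, hm, h3⟩ (by noncomm_ring)
  have key : a^(2*m) = a^(2*m+1) * (a*d) := by
    calc a^(2*m) = (a^2)^m := pow_mul a 2 m
    _ = (a^2)^(m+1) * d := h3
    _ = a^(2*m+2) * d := by rw [← pow_mul, show 2*(m+1) = 2*m+2 from by omega]
    _ = (a^(2*m+1) * a) * d := by rw [← pow_succ]
    _ = a^(2*m+1) * (a*d) := by rw [mul_assoc]
  exact drz_of_pow_eq (by rw [mul_assoc, had]) (by omega) key

lemma drz_mul_of_commute {a b : R} (hab : a * b = b * a)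
    (ha : IsDrazinInvertible a) (hb : IsDrazinInvertible b) : IsDrazinInvertible (a*b) := by
  obtain ⟨u, hu1, hu2, k1, hk1, hu3⟩ := ha
  obtain ⟨v, hv1, hv2, k2, hk2, hv3⟩ := hb
  have cab : Commute a b := hab
  have hbu : b * u = u * b := drz_commute ⟨hu1,hu2,k1,hk1,hu3⟩ hab.symm
  have hav : a * v = v * a := drz_commute ⟨hv1,hv2,k2,hk2,hv3⟩ hab
  have hN : 0 < max k1 k2 := lt_of_lt_of_le hk1 (le_max_left _ _)
  have ea : a^(max k1 k2) = a^(max k1 k2+1) * u := drz_pow_ge' hu3 (le_max_left _ _)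
  have eb : b^(max k1 k2) = b^(max k1 k2+1) * v := drz_pow_ge' hv3 (le_max_right _ _)
  have hcomm : (a*b)*(u*v) = (u*v)*(a*b) := by
    have c1 : Commute (a*b) u := (Commute.mul_left (show Commute a u from hu1) (show Commute b u from hbu))
    have c2 : Commute (a*b) v := (Commute.mul_left (show Commute a v from hav) (show Commute b v from hv1))
    exact (c1.mul_right c2).eq
  have cub : Commute (b^(max k1 k2+1)) u := (show Commute b u from hbu).pow_left _
  have key : (a*b)^(max k1 k2) = (a*b)^(max k1 k2+1) * (u*v) := by
    calc (a*b)^(max k1 k2) = a^(max k1 k2) * b^(max k1 k2) := cab.mul_pow _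
    _ = (a^(max k1 k2+1)*u) * (b^(max k1 k2+1)*v) := by rw [← ea, ← eb]
    _ = a^(max k1 k2+1) * (u * b^(max k1 k2+1)) * v := by noncomm_ring
    _ = a^(max k1 k2+1) * (b^(max k1 k2+1) * u) * v := by rw [← cub.eq]
    _ = (a^(max k1 k2+1) * b^(max k1 k2+1)) * (u*v) := by noncomm_ring
    _ = (a*b)^(max k1 k2+1) * (u*v) := by rw [← cab.mul_pow]
  exact drz_of_pow_eq hcomm hN key

lemma orth_pow_add {a b : R} (hab : a*b = 0) (hba : b*a = 0) {n : ℕ} (hn : 0 < n) :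
    (a+b)^n = a^n + b^n := by
  induction n with
  | zero => omega
  | succ m ih =>
    rcases Nat.eq_zero_or_pos m with hm | hm
    · simp [hm]
    · obtain ⟨j, rfl⟩ : ∃ j, m = j+1 := ⟨m-1, by omega⟩
      have h1 : a^(j+1)*b = 0 := by rw [pow_succ, mul_assoc, hab, mul_zero]
      have h2 : b^(j+1)*a = 0 := by rw [pow_succ, mul_assoc, hba, mul_zero]
      rw [pow_succ, ih hm]
      calc (a^(j+1) + b^(j+1))*(a+b)
          = a^(j+1)*a + a^(j+1)*b + (b^(j+1)*a + b^(j+1)*b) := by noncomm_ring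
      _ = a^(j+1)*a + b^(j+1)*b := by rw [h1, h2]; abel
      _ = a^(j+1+1) + b^(j+1+1) := by rw [← pow_succ, ← pow_succ]

lemma drz_add_orth {a b : R} (hab : a*b = 0) (hba : b*a = 0)
    (ha : IsDrazinInvertible a) (hb : IsDrazinInvertible b) : IsDrazinInvertible (a+b) := by
  obtain ⟨u, hu1, hu2, k1, hk1, hu3⟩ := ha
  obtain ⟨v, hv1, hv2, k2, hk2, hv3⟩ := hb
  have huu : u = a * (u*u) := by
    calc u = u*a*u := hu2.symm
    _ = (a*u)*u := by rw [← hu1]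
    _ = a*(u*u) := by rw [mul_assoc]
  have huu' : u = (u*u) * a := by
    calc u = u*a*u := hu2.symm
    _ = u*(u*a) := by rw [mul_assoc, ← hu1]
    _ = (u*u)*a := by rw [← mul_assoc]
  have hvv : v = b * (v*v) := by
    calc v = v*b*v := hv2.symm
    _ = (b*v)*v := by rw [← hv1]
    _ = b*(v*v) := by rw [mul_assoc]
  have hvv' : v = (v*v) * b := by
    calc v = v*b*v := hv2.symm
    _ = v*(v*b) := by rw [mul_assoc, ← hv1]
    _ = (v*v)*b := by rw [← mul_assoc]
  have hbu : b*u = 0 := by rw [huu, ← mul_assoc, hba, zero_mul]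
  have hub : u*b = 0 := by rw [huu', mul_assoc, hab, mul_zero]
  have hav : a*v = 0 := by rw [hvv, ← mul_assoc, hab, zero_mul]
  have hva : v*a = 0 := by rw [hvv', mul_assoc, hba, mul_zero]
  have hN : 0 < max k1 k2 := lt_of_lt_of_le hk1 (le_max_left _ _)
  have ea : a^(max k1 k2) = a^(max k1 k2+1) * u := drz_pow_ge' hu3 (le_max_left _ _)
  have eb : b^(max k1 k2) = b^(max k1 k2+1) * v := drz_pow_ge' hv3 (le_max_right _ _)
  have hANv : a^(max k1 k2+1)*v = 0 := by rw [pow_succ, mul_assoc, hav, mul_zero]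
  have hBNu : b^(max k1 k2+1)*u = 0 := by rw [pow_succ, mul_assoc, hbu, mul_zero]
  refine ⟨u+v, ?_, ?_, max k1 k2, hN, ?_⟩
  · calc (a+b)*(u+v) = a*u + a*v + (b*u + b*v) := by noncomm_ring
    _ = a*u + b*v := by rw [hav, hbu]; abel
    _ = u*a + v*b := by rw [hu1, hv1]
    _ = u*a + u*b + (v*a + v*b) := by rw [hub, hva]; abel
    _ = (u+v)*(a+b) := by noncomm_ring
  · have step : (u+v)*(a+b) = u*a + v*b := by
      calc (u+v)*(a+b) = u*a + u*b + (v*a + v*b) := by noncomm_ring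
      _ = u*a + v*b := by rw [hub, hva]; abel
    rw [step]
    calc (u*a + v*b)*(u+v) = u*a*u + u*(a*v) + (v*(b*u) + v*b*v) := by noncomm_ring
    _ = u*a*u + v*b*v := by rw [hav, hbu, mul_zero, mul_zero]; abel
    _ = u + v := by rw [hu2, hv2]
  · rw [orth_pow_add hab hba hN, orth_pow_add hab hba (by omega : 0 < max k1 k2 + 1)]
    calc a^(max k1 k2) + b^(max k1 k2)
        = a^(max k1 k2+1) * u + b^(max k1 k2+1) * v := by rw [← ea, ← eb]
    _ = a^(max k1 k2+1)*u + a^(max k1 k2+1)*v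
          + (b^(max k1 k2+1)*u + b^(max k1 k2+1)*v) := by rw [hANv, hBNu]; abel
    _ = (a^(max k1 k2+1) + b^(max k1 k2+1)) * (u+v) := by noncomm_ring

lemma drz_orth_left {a b : R} (hab : a*b = 0) (hba : b*a = 0)
    (h : IsDrazinInvertible (a+b)) : IsDrazinInvertible a := by
  obtain ⟨d, h1, h2, K, hK, h3⟩ := h
  have hca : a*(a+b) = (a+b)*a := by
    rw [mul_add, add_mul, hab, hba]
  have had : a*d = d*a := drz_commute ⟨h1,h2,K,hK,h3⟩ hca
  have e0 : ∀ n : ℕ, 0 < n → a*(a+b)^n = a^(n+1) := by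
    intro n hn
    rw [orth_pow_add hab hba hn, mul_add]
    obtain ⟨j, rfl⟩ : ∃ j, n = j+1 := ⟨n-1, by omega⟩
    have : a*b^(j+1) = 0 := by rw [pow_succ' b j, ← mul_assoc, hab, zero_mul]
    rw [this, add_zero, ← pow_succ']
  have key : a^(K+1) = a^(K+2) * d := by
    calc a^(K+1) = a*(a+b)^K := (e0 K hK).symm
    _ = a*((a+b)^(K+1)*d) := by rw [← h3]
    _ = (a*(a+b)^(K+1))*d := by rw [mul_assoc]
    _ = a^(K+2)*d := by rw [e0 (K+1) (by omega)]
  exact drz_of_pow_eq (had) (by omega) key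
lemma drz_orth_right {a b : R} (hab : a*b = 0) (hba : b*a = 0)
    (h : IsDrazinInvertible (a+b)) : IsDrazinInvertible b :=
  drz_orth_left hba hab (by rwa [add_comm])

lemma geom_helper (y : R) (K : ℕ) : ∃ g : R, y*g = g*y ∧ (1-y)^K = 1 - y*g := by
  induction K with
  | zero => exact ⟨0, by simp, by simp⟩
  | succ n ih =>
    obtain ⟨g, hg, hgeq⟩ := ih
    refine ⟨1 + g - g*y, ?_, ?_⟩
    · have h1 : y*(1+g-g*y) = y + y*g - y*g*y := by noncomm_ring
      have h2 : (1+g-g*y)*y = y + g*y - g*y*y := by noncomm_ring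
      rw [h1, h2, ← hg]
    · rw [pow_succ, hgeq]
      noncomm_ring

lemma drz_of_sub_sq_nilpotent {y : R} {K : ℕ} (hK : 0 < K) (h : (y - y*y)^K = 0) :
    IsDrazinInvertible y := by
  obtain ⟨g, hg, hgeq⟩ := geom_helper y K
  have hyy : Commute y (1-y) := ((Commute.one_right y).sub_right (Commute.refl y))
  have e1 : (y*(1-y))^K = y^K * (1-y)^K := hyy.mul_pow K
  have e2 : y*(1-y) = y - y*y := by noncomm_ring
  have e3 : y^K * (1-y)^K = 0 := by rw [← e1, e2, h]
  rw [hgeq] at e3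
  have e4 : y^K - y^K*(y*g) = 0 := by
    calc y^K - y^K*(y*g) = y^K * (1 - y*g) := by noncomm_ring
    _ = 0 := e3
  have e5 : y^K = y^(K+1) * g := by
    calc y^K = y^K*(y*g) := sub_eq_zero.mp e4
    _ = (y^K*y)*g := by rw [mul_assoc]
    _ = y^(K+1)*g := by rw [← pow_succ]
  exact drz_of_pow_eq hg hK e5

/-- If `z*(1-z)` is Drazin invertible then so is `z`. -/
lemma drz_of_mul_one_sub {z : R} (h : IsDrazinInvertible (z*(1-z))) :
    IsDrazinInvertible z := by
  obtain ⟨d, hd1, hd2, K, hK, hd3⟩ := h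
  obtain ⟨w, hw⟩ : ∃ t : R, t = z*(1-z) := ⟨_, rfl⟩
  rw [← hw] at hd1 hd2 hd3
  have hw2 : w = z - z*z := by rw [hw]; noncomm_ring
  have hzw : z*w = w*z := by rw [hw2]; noncomm_ring
  have hzd : z*d = d*z := drz_commute ⟨hd1,hd2,K,hK,hd3⟩ hzw
  have he : (w*d)*(w*d) = w*d := by
    calc (w*d)*(w*d) = w*(d*w*d) := by noncomm_ring
    _ = w*d := by rw [hd2]
  have hed : (w*d)*d = d := by
    calc (w*d)*d = (d*w)*d := by rw [← hd1]
    _ = d := hd2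
  have hze : z*(w*d) = (w*d)*z := by
    calc z*(w*d) = (z*w)*d := by rw [mul_assoc]
    _ = (w*z)*d := by rw [hzw]
    _ = w*(z*d) := by rw [mul_assoc]
    _ = w*(d*z) := by rw [hzd]
    _ = (w*d)*z := by rw [mul_assoc]
  have hwk : w^K*(w*d) = w^K := by rw [← mul_assoc, ← pow_succ, ← hd3]
  have h1e : (1-z)*(w*d) = (w*d)*(1-z) := by
    rw [sub_mul, one_mul, mul_sub, mul_one, hze]
  have h1z : (1-z)*z = w := by rw [hw]; noncomm_ring
  have hz1v : (z*(w*d))*((1-z)*d) = w*d := by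
    calc (z*(w*d))*((1-z)*d) = z*((w*d)*(1-z))*d := by noncomm_ring
    _ = z*((1-z)*(w*d))*d := by rw [← h1e]
    _ = (z*(1-z))*((w*d)*d) := by noncomm_ring
    _ = w*d := by rw [← hw, hed]
  have hvz1 : ((1-z)*d)*(z*(w*d)) = w*d := by
    calc ((1-z)*d)*(z*(w*d)) = (1-z)*(d*z)*(w*d) := by noncomm_ring
    _ = (1-z)*(z*d)*(w*d) := by rw [← hzd]
    _ = ((1-z)*z)*(d*(w*d)) := by noncomm_ring
    _ = w*(d*(w*d)) := by rw [h1z]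
    _ = w*(d*w*d) := by rw [← mul_assoc d w d]
    _ = w*d := by rw [hd2]
  have piece1 : IsDrazinInvertible (z*(w*d)) := by
    refine ⟨(1-z)*d, by rw [hz1v, hvz1], ?_, 1, one_pos, ?_⟩
    · calc ((1-z)*d)*(z*(w*d))*((1-z)*d) = (w*d)*((1-z)*d) := by rw [hvz1]
      _ = ((w*d)*(1-z))*d := by rw [← mul_assoc]
      _ = ((1-z)*(w*d))*d := by rw [← h1e]
      _ = (1-z)*((w*d)*d) := by rw [mul_assoc]
      _ = (1-z)*d := by rw [hed]
    · have step : (z*(w*d))^(1+1)*((1-z)*d) = z*(w*d) := by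
        calc (z*(w*d))^(1+1)*((1-z)*d)
            = (z*(w*d))*((z*(w*d))*((1-z)*d)) := by
              rw [pow_succ, pow_one, mul_assoc]
        _ = (z*(w*d))*(w*d) := by rw [hz1v]
        _ = z*((w*d)*(w*d)) := by rw [mul_assoc]
        _ = z*(w*d) := by rw [he]
      rw [pow_one, step]
  have hf : (1-(w*d))*(1-(w*d)) = 1-(w*d) := by
    calc (1-(w*d))*(1-(w*d)) = 1 - (w*d) - (w*d) + (w*d)*(w*d) := by noncomm_ring
    _ = 1-(w*d) := by rw [he]; abel
  have hzf : z*(1-(w*d)) = (1-(w*d))*z := by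
    rw [mul_sub, sub_mul, mul_one, one_mul, hze]
  have hwe : w*(w*d) = (w*d)*w := by
    rw [mul_assoc w d w, ← hd1, ← mul_assoc]
  have cwf : w*(1-(w*d)) = (1-(w*d))*w := by
    rw [mul_sub, sub_mul, mul_one, one_mul, hwe]
  have piece2 : IsDrazinInvertible (z*(1-(w*d))) := by
    apply drz_of_sub_sq_nilpotent hK
    have e1 : z*(1-(w*d)) - (z*(1-(w*d)))*(z*(1-(w*d))) = w*(1-(w*d)) := by
      calc z*(1-(w*d)) - (z*(1-(w*d)))*(z*(1-(w*d)))
          = z*(1-(w*d)) - z*((1-(w*d))*z)*(1-(w*d)) := by noncomm_ring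
      _ = z*(1-(w*d)) - z*(z*(1-(w*d)))*(1-(w*d)) := by rw [← hzf]
      _ = z*(1-(w*d)) - (z*z)*((1-(w*d))*(1-(w*d))) := by noncomm_ring
      _ = z*(1-(w*d)) - (z*z)*(1-(w*d)) := by rw [hf]
      _ = (z - z*z)*(1-(w*d)) := by noncomm_ring
      _ = w*(1-(w*d)) := by rw [← hw2]
    rw [e1]
    have cw : Commute w (1-(w*d)) := cwf
    rw [cw.mul_pow, idem_pow hf hK, mul_sub, mul_one, hwk, sub_self]
  have orth1 : (z*(w*d))*(z*(1-(w*d))) = 0 := by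
    have h0 : (w*d)*(1-(w*d)) = 0 := by rw [mul_sub, mul_one, he, sub_self]
    calc (z*(w*d))*(z*(1-(w*d))) = z*((w*d)*z)*(1-(w*d)) := by noncomm_ring
    _ = z*(z*(w*d))*(1-(w*d)) := by rw [← hze]
    _ = (z*z)*((w*d)*(1-(w*d))) := by noncomm_ring
    _ = 0 := by rw [h0, mul_zero]
  have orth2 : (z*(1-(w*d)))*(z*(w*d)) = 0 := by
    have h0 : (1-(w*d))*(w*d) = 0 := by rw [sub_mul, one_mul, he, sub_self]
    calc (z*(1-(w*d)))*(z*(w*d)) = z*((1-(w*d))*z)*(w*d) := by noncomm_ring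
    _ = z*(z*(1-(w*d)))*(w*d) := by rw [← hzf]
    _ = (z*z)*((1-(w*d))*(w*d)) := by noncomm_ring
    _ = 0 := by rw [h0, mul_zero]
  have hsum : z*(w*d) + z*(1-(w*d)) = z := by
    rw [← mul_add, add_sub_cancel, mul_one]
  have hres := drz_add_orth orth1 orth2 piece1 piece2
  rwa [hsum] at hres
/-- Key lemma: if `p*q` is Drazin invertible (p,q idempotents) then so is `(1-q)*(1-p)`. -/
lemma drz_one_sub_mul_of {p q : R} (hp : p*p = p) (hq : q*q = q)
    (h : IsDrazinInvertible (p*q)) : IsDrazinInvertible ((1-q)*(1-p)) := by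
  obtain ⟨e, he1, he2, m, hm, he3⟩ := h
  have F0a : p*(p*q) = p*q := by rw [← mul_assoc, hp]
  have F0b : (p*q)*q = p*q := by rw [mul_assoc, hq]
  have hp0 : p*(1-p) = 0 := by rw [mul_sub, mul_one, hp, sub_self]
  have hq0 : (1-q)*q = 0 := by rw [sub_mul, one_mul, hq, sub_self]
  have hxe2 : e = (p*q)*(e*e) := by
    calc e = e*(p*q)*e := he2.symm
    _ = ((p*q)*e)*e := by rw [← he1]
    _ = (p*q)*(e*e) := by rw [mul_assoc]
  have hxe2' : e = (e*e)*(p*q) := by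
    calc e = e*(p*q)*e := he2.symm
    _ = e*((p*q)*e) := by rw [mul_assoc]
    _ = e*(e*(p*q)) := by rw [he1]
    _ = (e*e)*(p*q) := by rw [← mul_assoc]
  have hpe : p*e = e := by
    conv_lhs => rw [hxe2]
    rw [← mul_assoc, F0a, ← hxe2]
  have heq : e*q = e := by
    conv_lhs => rw [hxe2']
    rw [mul_assoc, F0b, ← hxe2']
  -- the multiplication rules
  have R2l : ∀ β : R, p*β = β →
      ((1-q)*(1-p)) * ((1-q)*β*(1-p)) = (1-q)*((p*q)*β)*(1-p) := by
    intro β hβ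
    have step1 : ((1-q)*(1-p)) * ((1-q)*β*(1-p))
        = (1-q)*(β - p*β - q*β + p*(q*β))*(1-p) := by noncomm_ring
    have step2 : β - p*β - q*β + p*(q*β) = p*(q*β) - q*β := by rw [hβ]; abel
    rw [step1, step2]
    have step3 : (1-q)*(p*(q*β) - q*β)*(1-p)
        = (1-q)*(p*(q*β))*(1-p) - ((1-q)*q)*β*(1-p) := by noncomm_ring
    rw [step3, hq0]
    noncomm_ring
  have R2r : ∀ β : R, β*q = β →
      ((1-q)*β*(1-p)) * ((1-q)*(1-p)) = (1-q)*(β*(p*q))*(1-p) := by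
    intro β hβ
    have step1 : ((1-q)*β*(1-p)) * ((1-q)*(1-p))
        = (1-q)*(β - β*p - β*q + (β*p)*q)*(1-p) := by noncomm_ring
    have step2 : β - β*p - β*q + (β*p)*q = (β*p)*q - β*p := by rw [hβ]; abel
    rw [step1, step2]
    have step3 : (1-q)*((β*p)*q - β*p)*(1-p)
        = (1-q)*((β*p)*q)*(1-p) - (1-q)*β*(p*(1-p)) := by noncomm_ring
    rw [step3, hp0]
    noncomm_ring
  have base : ((1-q)*(1-p))*((1-q)*(1-p)) = (1-q)*(1-p) + (1-q)*(p*q)*(1-p) := by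
    have step1 : ((1-q)*(1-p))*((1-q)*(1-p))
        = (1-q)*(1-p) - (1-q)*(p*(1-p)) - ((1-q)*q)*(1-p) + (1-q)*(p*q)*(1-p) := by
      noncomm_ring
    rw [step1, hp0, hq0, mul_zero, zero_mul, sub_zero, sub_zero]
  have hxq : ∀ n : ℕ, (p*q)^(n+1)*q = (p*q)^(n+1) := by
    intro n
    rw [pow_succ, mul_assoc, F0b]
  have hpx : ∀ n : ℕ, p*(p*q)^(n+1) = (p*q)^(n+1) := by
    intro n
    rw [pow_succ', ← mul_assoc, F0a]
  -- power formula
  have Fpow : ∀ n : ℕ, ((1-q)*(1-p))^(n+1+1) = ((1-q)*(1-p))^(n+1) + (1-q)*((p*q)^(n+1))*(1-p) := by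
    intro n
    induction n with
    | zero =>
      rw [show (0:ℕ)+1+1 = 2 from rfl, show (0:ℕ)+1 = 1 from rfl, pow_two, pow_one, pow_one]
      exact base
    | succ j ih =>
      calc ((1-q)*(1-p))^(j+1+1+1)
          = (((1-q)*(1-p))^(j+1+1)) * ((1-q)*(1-p)) := pow_succ _ _
      _ = (((1-q)*(1-p))^(j+1) + (1-q)*((p*q)^(j+1))*(1-p)) * ((1-q)*(1-p)) := by rw [ih]
      _ = ((1-q)*(1-p))^(j+1) * ((1-q)*(1-p))
            + ((1-q)*((p*q)^(j+1))*(1-p)) * ((1-q)*(1-p)) := add_mul _ _ _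
      _ = ((1-q)*(1-p))^(j+1+1) + (1-q)*((p*q)^(j+1)*(p*q))*(1-p) := by
            rw [← pow_succ, R2r ((p*q)^(j+1)) (hxq j)]
      _ = ((1-q)*(1-p))^(j+1+1) + (1-q)*((p*q)^(j+1+1))*(1-p) := by rw [← pow_succ]
  -- left multiplication of powers into pi-terms
  have Apow : ∀ (n : ℕ) (β : R), p*β = β →
      ((1-q)*(1-p))^n * ((1-q)*β*(1-p)) = (1-q)*((p*q)^n*β)*(1-p) := by
    intro n
    induction n with
    | zero => intro β hβ; rw [pow_zero, one_mul, pow_zero, one_mul]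
    | succ j ih =>
      intro β hβ
      have hβ' : p*((p*q)*β) = (p*q)*β := by rw [← mul_assoc, F0a]
      calc ((1-q)*(1-p))^(j+1) * ((1-q)*β*(1-p))
          = ((1-q)*(1-p))^j * (((1-q)*(1-p)) * ((1-q)*β*(1-p))) := by
            rw [pow_succ, mul_assoc]
      _ = ((1-q)*(1-p))^j * ((1-q)*((p*q)*β)*(1-p)) := by rw [R2l β hβ]
      _ = (1-q)*((p*q)^j*((p*q)*β))*(1-p) := ih _ hβ'
      _ = (1-q)*((p*q)^(j+1)*β)*(1-p) := by
            rw [show (p*q)^j*((p*q)*β) = (p*q)^(j+1)*β from by rw [← mul_assoc, ← pow_succ]]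
  -- the commuting pseudo-inverse ingredient
  have pγ : p*(e + e*(p*q)) = e + e*(p*q) := by
    rw [mul_add, ← mul_assoc, hpe]
  have γq : (e + e*(p*q))*q = e + e*(p*q) := by
    rw [add_mul, heq, mul_assoc, F0b]
  have hgx : (p*q)*(e + e*(p*q)) = (e + e*(p*q))*(p*q) := by
    calc (p*q)*(e + e*(p*q)) = (p*q)*e + ((p*q)*e)*(p*q) := by rw [mul_add, ← mul_assoc]
    _ = e*(p*q) + (e*(p*q))*(p*q) := by rw [he1]
    _ = (e + e*(p*q))*(p*q) := by rw [add_mul]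
  have hxg : (p*q)^(m+1)*(e + e*(p*q)) = (p*q)^m + (p*q)^(m+1) := by
    calc (p*q)^(m+1)*(e + e*(p*q))
        = (p*q)^(m+1)*e + ((p*q)^(m+1)*e)*(p*q) := by
          rw [mul_add, mul_assoc ((p*q)^(m+1)) e (p*q)]
    _ = (p*q)^m + (p*q)^m*(p*q) := by rw [← he3]
    _ = (p*q)^m + (p*q)^(m+1) := by rw [← pow_succ]
  -- define c := A' - pi(g)
  have hcomm : ((1-q)*(1-p)) * ((1-q)*(1-p) - (1-q)*(e + e*(p*q))*(1-p))
      = ((1-q)*(1-p) - (1-q)*(e + e*(p*q))*(1-p)) * ((1-q)*(1-p)) := by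
    have l1 := mul_sub ((1-q)*(1-p)) ((1-q)*(1-p)) ((1-q)*(e + e*(p*q))*(1-p))
    have l2 := sub_mul ((1-q)*(1-p)) ((1-q)*(e + e*(p*q))*(1-p)) ((1-q)*(1-p))
    rw [l1, l2, base, R2l _ pγ, R2r _ γq, hgx]
  have hkey : ((1-q)*(1-p))^m
      = ((1-q)*(1-p))^(m+1) * ((1-q)*(1-p) - (1-q)*(e + e*(p*q))*(1-p)) := by
    obtain ⟨j, rfl⟩ : ∃ j, m = j+1 := ⟨m-1, by omega⟩
    have l3 := mul_sub (((1-q)*(1-p))^(j+1+1)) ((1-q)*(1-p)) ((1-q)*(e + e*(p*q))*(1-p))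
    rw [l3, ← pow_succ, Apow (j+1+1) _ pγ, hxg]
    rw [Fpow (j+1), Fpow j]
    have expand : (1-q)*((p*q)^(j+1) + (p*q)^(j+1+1))*(1-p)
        = (1-q)*((p*q)^(j+1))*(1-p) + (1-q)*((p*q)^(j+1+1))*(1-p) := by noncomm_ring
    rw [expand]
    abel
  exact drz_of_pow_eq hcomm hm hkey

theorem stmt19 (p q : R) (hp : p ^ 2 = p) (hq : q ^ 2 = q) :
    IsDrazinInvertible (p * q + q * p) ↔ (IsDrazinInvertible (p * q) ∧ IsDrazinInvertible (p + q)) := by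
  have hp' : p*p = p := by rw [← pow_two, hp]
  have hq' : q*q = q := by rw [← pow_two, hq]
  have hs : (p+q)*(1-(p+q)) = -(p*q + q*p) := by
    have h1 : (p+q)*(1-(p+q)) = p + q - (p*p + p*q + (q*p + q*q)) := by noncomm_ring
    rw [h1, hp', hq']; abel
  have hu2 : (1-(p+q))^2 = (1-q)*(1-p) + p*q := by
    have h1 : (1-(p+q))^2 = 1 - p - q - p - q + (p*p + p*q + (q*p + q*q)) := by noncomm_ring
    rw [h1, hp', hq']
    have h2 : (1-q)*(1-p) + p*q = 1 - q - p + q*p + p*q := by noncomm_ring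
    rw [h2]; abel
  have horthA : ((1-q)*(1-p))*(p*q) = 0 := by
    have h0 : (1-p)*p = 0 := by rw [sub_mul, one_mul, hp', sub_self]
    calc ((1-q)*(1-p))*(p*q) = (1-q)*(((1-p)*p)*q) := by noncomm_ring
    _ = 0 := by rw [h0, zero_mul, mul_zero]
  have horthB : (p*q)*((1-q)*(1-p)) = 0 := by
    have h0 : q*(1-q) = 0 := by rw [mul_sub, mul_one, hq', sub_self]
    calc (p*q)*((1-q)*(1-p)) = p*((q*(1-q))*(1-p)) := by noncomm_ring
    _ = 0 := by rw [h0, zero_mul, mul_zero]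
  constructor
  · intro ha
    have hsd : IsDrazinInvertible ((p+q)*(1-(p+q))) := by
      rw [hs]; exact drz_neg ha
    have hS : IsDrazinInvertible (p+q) := drz_of_mul_one_sub hsd
    have hU : IsDrazinInvertible (1-(p+q)) := by
      apply drz_of_mul_one_sub
      have h1 : (1-(p+q))*(1-(1-(p+q))) = (p+q)*(1-(p+q)) := by noncomm_ring
      rw [h1]; exact hsd
    have hU2 : IsDrazinInvertible ((1-(p+q))^2) := drz_sq_of hU
    rw [hu2] at hU2
    exact ⟨drz_orth_right horthA horthB hU2, hS⟩
  · rintro ⟨hx, hS⟩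
    have hA : IsDrazinInvertible ((1-q)*(1-p)) := drz_one_sub_mul_of hp' hq' hx
    have hU2 : IsDrazinInvertible ((1-(p+q))^2) := by
      rw [hu2]; exact drz_add_orth horthA horthB hA hx
    have hU : IsDrazinInvertible (1-(p+q)) := drz_of_sq hU2
    have hprod : IsDrazinInvertible ((p+q)*(1-(p+q))) :=
      drz_mul_of_commute (by noncomm_ring) hS hU
    rw [hs] at hprod
    have hres := drz_neg hprod
    rwa [neg_neg] at hres
end
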